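/- arXiv:2605.04867 — 8 statements merged into one kernel-verified Lean document; each statement's English description precedes it below -/
import Mathlib

section
/- The function G : ℝ → ℝ defined by G(x) = x⁴ · (15 − 4x − 10x²/(1 − 2x(1−x))) is strictly increasing on the open interval (0,1). In particular, for p, q ∈ (0,1) one has G(p) > G(q) if and only if p > q. -/
/-! Differentiating the quotient, `G'(x) = 20 x³ (1 - x)³ (4x² - 4x + 3) / (1 - 2x(1 - x))²`;
every factor is positive on `(0, 1)` (as `4x² - 4x + 3 = (2x - 1)² + 2`), so `G` is strictly
increasing there by the mean value theorem. -/

noncomputable def G (x : ℝ) : ℝ := x^4 * (15 - 4*x - 10*x^2 / (1 - 2*x*(1-x)))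

lemma one_sub_two_mul_mul_one_sub_pos (x : ℝ) : 0 < 1 - 2*x*(1-x) := by
  nlinarith [sq_nonneg (2*x - 1)]

lemma hasDerivAt_G (x : ℝ) :
    HasDerivAt G (20*x^3*(1-x)^3*(4*x^2-4*x+3) / (1 - 2*x*(1-x))^2) x := by
  have hD := (one_sub_two_mul_mul_one_sub_pos x).ne'
  have hid := hasDerivAt_id' x
  have hdenom := (hasDerivAt_const x (1:ℝ)).sub
    ((hid.const_mul 2).mul ((hasDerivAt_const x (1:ℝ)).sub hid))
  have h := (hid.pow 4).mul (((hasDerivAt_const x (15:ℝ)).sub (hid.const_mul 4)).sub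
    (((hid.pow 2).const_mul 10).div hdenom hD))
  refine h.congr_deriv ?_
  simp only [Pi.sub_apply, Pi.mul_apply, Pi.pow_apply, Pi.div_apply]
  -- hide the denominator, which `field_simp` would otherwise expand past recognising `hD`
  generalize hD' : 1 - 2*x*(1-x) = D at hD ⊢
  field_simp
  subst hD'
  ring

lemma deriv_G_numerator_pos {x : ℝ} (hx : x ∈ Set.Ioo (0:ℝ) 1) :
    0 < 20*x^3*(1-x)^3*(4*x^2-4*x+3) := by
  obtain ⟨hx₀, hx₁⟩ := hx
  have hquad : 0 < 4*x^2-4*x+3 := by nlinarith [sq_nonneg (2*x - 1)]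
  have hx₁' : 0 < 1 - x := sub_pos.mpr hx₁
  positivity

theorem G_strictMonoOn :
    StrictMonoOn G (Set.Ioo (0:ℝ) 1) ∧
    ∀ p ∈ Set.Ioo (0:ℝ) 1, ∀ q ∈ Set.Ioo (0:ℝ) 1, (G p > G q ↔ p > q) := by
  have hmono : StrictMonoOn G (Set.Ioo (0:ℝ) 1) := by
    refine strictMonoOn_of_hasDerivWithinAt_pos (convex_Ioo 0 1)
      (fun x _ ↦ (hasDerivAt_G x).continuousAt.continuousWithinAt)
      (fun x _ ↦ (hasDerivAt_G x).hasDerivWithinAt) fun x hx ↦ ?_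
    rw [interior_Ioo] at hx
    exact div_pos (deriv_G_numerator_pos hx) (pow_pos (one_sub_two_mul_mul_one_sub_pos x) 2)
  exact ⟨hmono, fun p hp q hq ↦ hmono.lt_iff_lt hq hp⟩
end

section
/- For every x ∈ (0,1), G(1−x) = 1 − G(x). -/
lemma one_sub_two_mul_mul_one_sub_pos_s1 {R : Type*} [CommRing R] [LinearOrder R]
    [IsStrictOrderedRing R] (x : R) : 0 < 1 - 2 * x * (1 - x) := by
  nlinarith [sq_nonneg (2 * x - 1)]

theorem G_symm_general (x : ℝ) : G (1 - x) = 1 - G x := by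
  have hden_symm : 1 - 2 * (1 - x) * (1 - (1 - x)) = 1 - 2 * x * (1 - x) := by ring
  have hden := (one_sub_two_mul_mul_one_sub_pos_s1 x).ne'
  unfold G
  rw [hden_symm]
  -- Kept as an atom, the common denominator is not rewritten by `field_simp` out of reach of `hden`.
  generalize hd : 1 - 2 * x * (1 - x) = d at hden ⊢
  field_simp
  subst hd
  ring

theorem G_symm (x : ℝ) (hx : x ∈ Set.Ioo (0:ℝ) 1) : G (1 - x) = 1 - G x :=
  G_symm_general x
end

section
/- For all real numbers a, b, the following polynomial identity holds: π₇^A − π₇^B = 3(a−b)(a+b−1)(a+b−2ab)(1−a−b+2ab). -/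
noncomputable section

/-- Probability that the set ends 6-0 for the player serving first. -/
def S60 (x1 y2 : ℝ) : ℝ := (x1*y2)^3
def S61 (x1 x2 y1 y2 : ℝ) : ℝ := 3*x1^3*x2*y2^3 + 3*x1^4*y1*y2^2
def S62 (x1 x2 y1 y2 : ℝ) : ℝ :=
  12*x1^3*x2*y1*y2^3 + 6*x1^2*x2^2*y2^4 + 3*x1^4*y1^2*y2^2
def S63 (x1 x2 y1 y2 : ℝ) : ℝ :=
  24*x1^3*x2^2*y1*y2^3 + 24*x1^4*x2*y1^2*y2^2 + 4*x1^2*x2^3*y2^4 + 4*x1^5*y1^3*y2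
def S64 (x1 x2 y1 y2 : ℝ) : ℝ :=
  60*x1^3*x2^2*y1^2*y2^3 + 40*x1^2*x2^3*y1*y2^4 + 20*x1^4*x2*y1^3*y2^2
    + 5*x1*x2^4*y2^5 + x1^5*y1^4*y2
def S75 (x1 x2 y1 y2 : ℝ) : ℝ :=
  100*x1^3*x2^3*y1^2*y2^4 + 100*x1^4*x2^2*y1^3*y2^3 + 25*x1^2*x2^4*y1*y2^5
    + 25*x1^5*x2*y1^4*y2^2 + x1*x2^5*y2^6 + x1^6*y1^5*y2

/- Set-score probabilities when A serves first, as functions of the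
   game-winning-on-serve probabilities a (for A) and b (for B). -/
def SA60 (a b : ℝ) : ℝ := S60 a (1-b)
def SA06 (a b : ℝ) : ℝ := ((1-a)*b)^3
def SA61 (a b : ℝ) : ℝ := S61 a (1-a) b (1-b)
def SA16 (a b : ℝ) : ℝ := S61 (1-a) a (1-b) b
def SA62 (a b : ℝ) : ℝ := S62 a (1-a) b (1-b)
def SA26 (a b : ℝ) : ℝ := S62 (1-a) a (1-b) b
def SA63 (a b : ℝ) : ℝ := S63 a (1-a) b (1-b)
def SA36 (a b : ℝ) : ℝ := S63 (1-a) a (1-b) b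
def SA64 (a b : ℝ) : ℝ := S64 a (1-a) b (1-b)
def SA46 (a b : ℝ) : ℝ := S64 (1-a) a (1-b) b
def SA75 (a b : ℝ) : ℝ := S75 a (1-a) b (1-b)
def SA57 (a b : ℝ) : ℝ := S75 (1-a) a (1-b) b
def SA66 (a b : ℝ) : ℝ :=
  1 - (SA60 a b + SA06 a b + SA61 a b + SA16 a b + SA62 a b + SA26 a b
        + SA63 a b + SA36 a b + SA64 a b + SA46 a b)
    - SA75 a b - SA57 a b

/- Probabilities that a set with first server A (resp. B) ends after exactly
   k games.  When B serves first the roles of a and b are interchanged. -/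
def pi6A (a b : ℝ) : ℝ := SA60 a b + SA06 a b
def pi7A (a b : ℝ) : ℝ := SA61 a b + SA16 a b
def pi8A (a b : ℝ) : ℝ := SA62 a b + SA26 a b
def pi9A (a b : ℝ) : ℝ := SA63 a b + SA36 a b
def pi10A (a b : ℝ) : ℝ := SA64 a b + SA46 a b
def pi12A (a b : ℝ) : ℝ := SA75 a b + SA57 a b
def pi13A (a b : ℝ) : ℝ := SA66 a b

def pi6B (a b : ℝ) : ℝ := pi6A b a
def pi7B (a b : ℝ) : ℝ := pi7A b a
def pi8B (a b : ℝ) : ℝ := pi8A b a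
def pi9B (a b : ℝ) : ℝ := pi9A b a
def pi10B (a b : ℝ) : ℝ := pi10A b a
def pi12B (a b : ℝ) : ℝ := pi12A b a
def pi13B (a b : ℝ) : ℝ := pi13A b a

theorem pi7_diff (a b : ℝ) :
    pi7A a b - pi7B a b
      = 3*(a-b)*(a+b-1)*(a+b-2*a*b)*(1-a-b+2*a*b) := by
  simp only [pi7A, pi7B, SA61, SA16, S61]; ring
end
end

section
/- If a, b ∈ (0,1), a > b and a + b > 1, then π₇^A > π₇^B. -/
noncomputable section

theorem pi7_gt (a b : ℝ) (ha : a ∈ Set.Ioo (0:ℝ) 1) (hb : b ∈ Set.Ioo (0:ℝ) 1)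
    (hab : a > b) (hsum : a + b > 1) : pi7A a b > pi7B a b := by
  obtain ⟨ha0, ha1⟩ := ha
  obtain ⟨hb0, hb1⟩ := hb
  have key : pi7A a b - pi7B a b
      = 3*(a-b)*(a+b-1)*(b*(1-b)+a*(1-a)*(2*b-1)^2) := by
    unfold pi7B pi7A SA61 SA16 S61; ring
  have h1 : (0:ℝ) < b*(1-b)+a*(1-a)*(2*b-1)^2 := by
    have := mul_pos hb0 (by linarith : (0:ℝ) < 1-b)
    have := mul_nonneg (le_of_lt (mul_pos ha0 (by linarith : (0:ℝ) < 1-a))) (sq_nonneg (2*b-1))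
    linarith
  have h2 : (0:ℝ) < 3*(a-b)*(a+b-1) := by
    have : (0:ℝ) < a-b := by linarith
    have : (0:ℝ) < a+b-1 := by linarith
    nlinarith
  nlinarith [mul_pos h2 h1]
end
end

section
/- For all real numbers a, b, the following polynomial identity holds: π₈^A − π₈^B = −(π₇^A − π₇^B). -/
noncomputable section

theorem pi8_diff (a b : ℝ) :
    pi8A a b - pi8B a b = -(pi7A a b - pi7B a b) := by
  simp only [pi8A, pi8B, pi7A, pi7B, SA62, SA26, SA61, SA16, S62, S61]; ring
end
end

section
/- If a, b ∈ (0,1) and a + b > 1, then 1 − 2a + a² − 2b + 9ab − 7a²b + b² − 7ab² + 7a²b² > 0. -/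
theorem last_factor_pos (a b : ℝ) (ha : a ∈ Set.Ioo (0:ℝ) 1) (hb : b ∈ Set.Ioo (0:ℝ) 1)
    (hsum : a + b > 1) :
    1 - 2*a + a^2 - 2*b + 9*a*b - 7*a^2*b + b^2 - 7*a*b^2 + 7*a^2*b^2 > 0 := by
  obtain ⟨ha0, ha1⟩ := ha
  obtain ⟨hb0, hb1⟩ := hb
  nlinarith [sq_nonneg (1 - a - b), mul_pos (mul_pos ha0 hb0) (mul_pos (sub_pos.2 ha1) (sub_pos.2 hb1))]
end

section
/- Let p be a real number and let α_e, α_o, β_e, β_o, γ_e, γ_o, δ_e, δ_o be real numbers satisfying α_e + α_o = p, γ_e + γ_o = p, β_e + β_o = 1 − p and δ_e + δ_o = 1 − p. Define ρ_A = 2α_eβ_e + α_oδ_o + β_oγ_o and ρ_B = γ_eδ_o + γ_oβ_e + δ_eγ_o + δ_oα_e. Then ρ_A − ρ_B = 2(α_e − γ_o)(β_e − δ_o). -/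
theorem rho_diff (p αe αo βe βo γe γo δe δo : ℝ)
    (hα : αe + αo = p) (hγ : γe + γo = p)
    (hβ : βe + βo = 1 - p) (hδ : δe + δo = 1 - p) :
    (2*αe*βe + αo*δo + βo*γo) - (γe*δo + γo*βe + δe*γo + δo*αe)
      = 2*(αe - γo)*(βe - δo) := by
  have h1 : αo = p - αe := by linarith
  have h2 : γe = p - γo := by linarith
  have h3 : βo = 1 - p - βe := by linarith
  have h4 : δe = 1 - p - δo := by linarith
  subst h1 h2 h3 h4; ring
end

section
/- Let p ∈ (0,1) and let α_e, α_o, β_e, β_o, γ_e, γ_o, δ_e, δ_o be nonnegative real numbers satisfying α_e + α_o = p, γ_e + γ_o = p, β_e + β_o = 1 − p and δ_e + δ_o = 1 − p. Define q_A = α_e + β_e, q_B = γ_o + δ_o, ρ_A = 2α_eβ_e + α_oδ_o + β_oγ_o and ρ_B = γ_eδ_o + γ_oβ_e + δ_eγ_o + δ_oα_e. Then 1 + (q_A − q_B) + (ρ_A − ρ_B) > 0; that is, the expected number of sets started by A is strictly larger when A serves first in the match than when B does. -/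
set_option maxHeartbeats 1000000 in

theorem sets_started_diff_pos (p αe αo βe βo γe γo δe δo : ℝ)
    (hp : p ∈ Set.Ioo (0:ℝ) 1)
    (hαe : 0 ≤ αe) (hαo : 0 ≤ αo) (hβe : 0 ≤ βe) (hβo : 0 ≤ βo)
    (hγe : 0 ≤ γe) (hγo : 0 ≤ γo) (hδe : 0 ≤ δe) (hδo : 0 ≤ δo)
    (hα : αe + αo = p) (hγ : γe + γo = p)
    (hβ : βe + βo = 1 - p) (hδ : δe + δo = 1 - p) :
    1 + ((αe + βe) - (γo + δo))
      + ((2*αe*βe + αo*δo + βo*γo) - (γe*δo + γo*βe + δe*γo + δo*αe)) > 0 := by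
  obtain ⟨hp0, hp1⟩ := hp
  set u := αe - γo with hu
  set v := βe - δo with hv
  have h1 : 1 + ((αe + βe) - (γo + δo))
      + ((2*αe*βe + αo*δo + βo*γo) - (γe*δo + γo*βe + δe*γo + δo*αe))
      = 1 + u + v + 2*u*v := by
    have hαo' : αo = p - αe := by linarith
    have hγe' : γe = p - γo := by linarith
    have hβo' : βo = 1 - p - βe := by linarith
    have hδe' : δe = 1 - p - δo := by linarith
    rw [hαo', hγe', hβo', hδe']; ring
  rw [h1]
  have hu1 : -p ≤ u := by simp only [hu]; linarith
  have hu2 : u ≤ p := by simp only [hu]; linarith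
  have hv1 : -(1-p) ≤ v := by simp only [hv]; linarith
  have hv2 : v ≤ 1 - p := by simp only [hv]; linarith
  nlinarith [mul_nonneg (by linarith : (0:ℝ) ≤ p - u) (by linarith : (0:ℝ) ≤ 1 - p - v),
    mul_nonneg (by linarith : (0:ℝ) ≤ p - u) (by linarith : (0:ℝ) ≤ 1 - p + v),
    mul_nonneg (by linarith : (0:ℝ) ≤ p + u) (by linarith : (0:ℝ) ≤ 1 - p - v),
    mul_nonneg (by linarith : (0:ℝ) ≤ p + u) (by linarith : (0:ℝ) ≤ 1 - p + v),
    mul_pos hp0 (by linarith : (0:ℝ) < 1 - p), mul_pos hp0 hp0,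
    mul_pos (by linarith : (0:ℝ) < 1 - p) (by linarith : (0:ℝ) < 1 - p)]
end
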